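/- For all k, ℓ ≥ 0 and n > 0, ∑_{s=0}^{ℓ} (-1)^{ℓ-s} u^{binom(ℓ-s,2)} · [k+s choose n]_u · [k+2s choose s]_u · [k+s+ℓ choose ℓ-s]_u · [k+2ℓ]/[k+s+ℓ] = u^{ℓ²+ℓ(k-n)} · ([k+2ℓ]/[n+ℓ]) · [n+ℓ choose n]_u · [k+ℓ-1 choose n-1]_u. -/

import Mathlib

open Finset

noncomputable section

/-- The field of rational functions in the variable `u`. -/
abbrev K : Type := RatFunc ℚ

/-- The variable `u`. -/
def u : K := RatFunc.X

/-- The u-integer `[m] = 1 + u + ... + u^{m-1}`. -/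
def qint (m : ℕ) : K := ∑ i ∈ range m, u ^ i

/-- The u-factorial `[m]! = [1][2]⋯[m]`. -/
def qfact (m : ℕ) : K := ∏ i ∈ range m, qint (i + 1)

/-- The Gaussian binomial coefficient `[a choose b]_u`, zero unless `0 ≤ b ≤ a`. -/
def qbinom (a b : ℤ) : K :=
  if 0 ≤ b ∧ b ≤ a then qfact a.toNat / (qfact b.toNat * qfact (a - b).toNat) else 0

/-!
Two applications of trinomial revision
`[x choose a][x - a choose b] = [x choose a + b][a + b choose b]` and one of absorption
`[N + 1][x choose N + 1] = [x][x - 1 choose N]` turn the `s`-th summand into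
`[k + 2ℓ]/[n + ℓ] · [n + ℓ choose n]` times
`(-1)^{ℓ-s} u^{binom(ℓ-s,2)} [ℓ choose s][k + ℓ - 1 + s choose n + ℓ - 1]`.
What remains is the `ℓ`-fold q-difference of `y ↦ [y choose n + ℓ - 1]` at `y = k + ℓ - 1`, built
from the steps `f ↦ f(y + 1) - u^j f(y)` for `j < ℓ`. By q-Pascal each step lowers the bottom index
by one and contributes a power of `u`, which leaves `u^{ℓ(k + ℓ - n)} [k + ℓ - 1 choose n - 1]`.
Binomials with an integer top are used so that the shifts `y + 1` need no side conditions.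
-/

lemma u_ne_zero : u ≠ 0 := RatFunc.X_ne_zero

lemma u_pow_ne_one {m : ℕ} (hm : m ≠ 0) : u ^ m ≠ 1 := by
  rw [u, ← RatFunc.algebraMap_X, ← map_pow, ← map_one (algebraMap (Polynomial ℚ) K),
    (RatFunc.algebraMap_injective ℚ).ne_iff]
  intro h
  simpa [zero_pow hm] using congrArg (Polynomial.eval 0) h

lemma u_ne_one : u ≠ 1 := by simpa using u_pow_ne_one one_ne_zero

lemma u_zpow_ne_one {m : ℤ} (hm : m ≠ 0) : u ^ m ≠ 1 := by
  obtain ⟨p, rfl | rfl⟩ := m.eq_nat_or_neg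
  · simpa using u_pow_ne_one (by simpa using hm)
  · simpa using u_pow_ne_one (by simpa using hm)

def qnum (m : ℤ) : K := (u ^ m - 1) / (u - 1)

@[simp] lemma qnum_zero : qnum 0 = 0 := by simp [qnum]

lemma qnum_natCast (m : ℕ) : qnum m = qint m := by
  rw [qint, geom_sum_eq u_ne_one, qnum, zpow_natCast]

lemma qnum_ne_zero {m : ℤ} (hm : m ≠ 0) : qnum m ≠ 0 :=
  div_ne_zero (sub_ne_zero.mpr (u_zpow_ne_one hm)) (sub_ne_zero.mpr u_ne_one)

lemma qnum_add (a b : ℤ) : qnum (a + b) = qnum a + u ^ a * qnum b := by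
  have : u - 1 ≠ 0 := sub_ne_zero.mpr u_ne_one
  simp only [qnum, zpow_add₀ u_ne_zero]
  field_simp
  ring

lemma qfact_succ (m : ℕ) : qfact (m + 1) = qfact m * qnum (m + 1) := by
  rw [qfact, prod_range_succ, ← qfact, ← Nat.cast_succ, qnum_natCast]

lemma qfact_ne_zero (m : ℕ) : qfact m ≠ 0 := by
  induction m with
  | zero => simp [qfact]
  | succ m ih => rw [qfact_succ]; exact mul_ne_zero ih (qnum_ne_zero (by omega))

def qdescFactorial (x : ℤ) (N : ℕ) : K := ∏ j ∈ range N, qnum (x - j)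

lemma qdescFactorial_succ (x : ℤ) (N : ℕ) :
    qdescFactorial x (N + 1) = qdescFactorial x N * qnum (x - N) :=
  prod_range_succ _ _

lemma qdescFactorial_add (x : ℤ) (a b : ℕ) :
    qdescFactorial x (a + b) = qdescFactorial x a * qdescFactorial (x - a) b := by
  simp only [qdescFactorial, prod_range_add, Nat.cast_add, sub_add_eq_sub_sub]

lemma qdescFactorial_succ' (x : ℤ) (N : ℕ) :
    qdescFactorial x (N + 1) = qnum x * qdescFactorial (x - 1) N := by
  rw [add_comm, qdescFactorial_add]
  simp [qdescFactorial]

lemma qdescFactorial_self (m : ℕ) : qdescFactorial m m = qfact m := by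
  induction m with
  | zero => simp [qdescFactorial, qfact]
  | succ m ih =>
    rw [qdescFactorial_succ', qfact_succ, Nat.cast_succ, add_sub_cancel_right, ih, mul_comm]

lemma qdescFactorial_natCast_eq_zero {m N : ℕ} (h : m < N) : qdescFactorial m N = 0 :=
  prod_eq_zero (mem_range.mpr h) (by simp)

/-- For `x < 0` this is not `qbinom x N`, which vanishes there. -/
def qchoose (x : ℤ) (N : ℕ) : K := qdescFactorial x N / qfact N

@[simp] lemma qchoose_zero_right (x : ℤ) : qchoose x 0 = 1 := by
  simp [qchoose, qdescFactorial, qfact]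

lemma qchoose_natCast_eq_zero {m N : ℕ} (h : m < N) : qchoose m N = 0 := by
  rw [qchoose, qdescFactorial_natCast_eq_zero h, zero_div]

lemma qfact_add (a b : ℕ) : qfact (a + b) = qdescFactorial (a + b : ℕ) b * qfact a := by
  rw [← qdescFactorial_self, ← qdescFactorial_self, add_comm a b, qdescFactorial_add]
  push_cast
  rw [add_sub_cancel_left]

lemma qbinom_eq_qchoose {a : ℤ} (ha : 0 ≤ a) (b : ℕ) : qbinom a b = qchoose a b := by
  lift a to ℕ using ha
  rw [qbinom, qchoose]
  by_cases hb : b ≤ a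
  · obtain ⟨c, rfl⟩ := Nat.exists_eq_add_of_le' hb
    rw [if_pos (by omega)]
    simp only [Int.toNat_natCast, Nat.cast_add, add_sub_cancel_right]
    rw [← Nat.cast_add, Int.toNat_natCast, qfact_add, mul_div_mul_right _ _ (qfact_ne_zero c)]
  · rw [if_neg (by omega), qdescFactorial_natCast_eq_zero (by omega), zero_div]

lemma qnum_succ_mul_qchoose_succ (x : ℤ) (N : ℕ) :
    qnum (N + 1) * qchoose x (N + 1) = qnum x * qchoose (x - 1) N := by
  have := qnum_ne_zero (m := N + 1) (by omega)
  rw [qchoose, qchoose, qdescFactorial_succ', qfact_succ]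
  field_simp

lemma qnum_succ_mul_qchoose_succ' (x : ℤ) (N : ℕ) :
    qnum (N + 1) * qchoose x (N + 1) = qnum (x - N) * qchoose x N := by
  have := qnum_ne_zero (m := N + 1) (by omega)
  rw [qchoose, qchoose, qdescFactorial_succ, qfact_succ]
  field_simp

lemma qchoose_succ_succ (x : ℤ) (N : ℕ) :
    qchoose (x + 1) (N + 1) = qchoose x (N + 1) + u ^ (x - N) * qchoose x N := by
  apply mul_left_cancel₀ (qnum_ne_zero (m := N + 1) (by omega))
  rw [mul_add, qnum_succ_mul_qchoose_succ, qnum_succ_mul_qchoose_succ', add_sub_cancel_right,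
    show x + 1 = x - N + (N + 1) by ring, qnum_add]
  ring

lemma qchoose_succ_succ' (x : ℤ) (N : ℕ) :
    qchoose (x + 1) (N + 1) = qchoose x N + u ^ (N + 1) * qchoose x (N + 1) := by
  apply mul_left_cancel₀ (qnum_ne_zero (m := N + 1) (by omega))
  rw [mul_add, mul_left_comm _ (u ^ _), qnum_succ_mul_qchoose_succ, qnum_succ_mul_qchoose_succ',
    add_sub_cancel_right, show x + 1 = N + 1 + (x - N) by ring, qnum_add, ← Nat.cast_succ,
    zpow_natCast, Nat.succ_eq_add_one]
  ring

lemma qchoose_mul (x : ℤ) (b c : ℕ) :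
    qchoose x b * qchoose (x - b) c = qchoose x (b + c) * qchoose (b + c : ℕ) c := by
  have hfact := qfact_add b c
  have : qdescFactorial (b + c : ℕ) c ≠ 0 := left_ne_zero_of_mul (hfact ▸ qfact_ne_zero _)
  have := qfact_ne_zero b
  have := qfact_ne_zero c
  rw [qchoose, qchoose, qchoose, qchoose, qdescFactorial_add, hfact]
  field_simp

def qfwdDiff (l : ℕ) (f : ℤ → K) (x : ℤ) : K :=
  ∑ p ∈ antidiagonal l, (-1) ^ p.2 * u ^ p.2.choose 2 * qchoose l p.1 * f (x + p.1)

lemma qfwdDiff_succ (l : ℕ) (f : ℤ → K) (x : ℤ) :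
    qfwdDiff (l + 1) f x = qfwdDiff l f (x + 1) - u ^ l * qfwdDiff l f x := by
  -- the sum of `g` over `antidiagonal (l + 1)`, peeled off at `p.1 = 0` and at `p.2 = 0`
  set g : ℕ × ℕ → K := fun p =>
    (-1) ^ p.2 * u ^ p.2.choose 2 * u ^ p.1 * qchoose l p.1 * f (x + p.1)
  have hfirst : qfwdDiff (l + 1) f x = qfwdDiff l f (x + 1) + ∑ p ∈ antidiagonal (l + 1), g p := by
    rw [qfwdDiff, qfwdDiff, Nat.sum_antidiagonal_succ, Nat.sum_antidiagonal_succ]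
    simp only [g, Nat.cast_add, Nat.cast_one, qchoose_succ_succ', qchoose_zero_right]
    rw [add_left_comm, ← sum_add_distrib]
    congr 1
    · simp
    · refine sum_congr rfl fun p _ => ?_
      rw [show x + 1 + (p.1 : ℤ) = x + (p.1 + 1) by ring]
      ring
  have hlast : ∑ p ∈ antidiagonal (l + 1), g p = -(u ^ l * qfwdDiff l f x) := by
    rw [Nat.sum_antidiagonal_succ', qfwdDiff, mul_sum, ← sum_neg_distrib]
    simp only [g, qchoose_natCast_eq_zero l.lt_succ_self, mul_zero, zero_mul, zero_add]
    refine sum_congr rfl fun p hp => ?_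
    rw [← mem_antidiagonal.mp hp, Nat.choose_succ_succ', Nat.choose_one_right]
    ring
  rw [hfirst, hlast, sub_eq_add_neg]

lemma qfwdDiff_qchoose (l N : ℕ) (x : ℤ) :
    qfwdDiff l (fun y => qchoose y (N + l)) x = u ^ ((l : ℤ) * (x - N)) * qchoose x N := by
  induction l generalizing x N with
  | zero => simp [qfwdDiff]
  | succ l ih =>
    rw [qfwdDiff_succ, show N + (l + 1) = N + 1 + l by ring, ih, ih, qchoose_succ_succ]
    have hshift : u ^ ((l : ℤ) * (x - N)) = u ^ l * u ^ ((l : ℤ) * (x - (N + 1 : ℕ))) := by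
      rw [← zpow_natCast, ← zpow_add₀ u_ne_zero]
      push_cast
      ring_nf
    have hstep : u ^ (((l + 1 : ℕ) : ℤ) * (x - N)) = u ^ ((l : ℤ) * (x - N)) * u ^ (x - N) := by
      rw [← zpow_add₀ u_ne_zero]
      push_cast
      ring_nf
    rw [show x + 1 - ((N + 1 : ℕ) : ℤ) = x - N by push_cast; ring]
    linear_combination qchoose x (N + 1) * hshift - qchoose x N * hstep

lemma qchoose_mul_qchoose_mul_qchoose (x : ℤ) (s t N : ℕ) :
    qchoose x t * qchoose (x - t) s * qchoose (x - t - s) (N + 1) * qnum ((t + s + N : ℕ) + 1) =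
      qnum x * qchoose (t + s + N + 1 : ℕ) (N + 1) * qchoose (t + s : ℕ) s *
        qchoose (x - 1) (t + s + N) := by
  have hB := qchoose_mul x (t + s) (N + 1)
  rw [← add_assoc] at hB
  rw [qchoose_mul, sub_sub, ← Nat.cast_add]
  linear_combination (qchoose (t + s : ℕ) s * qnum ((t + s + N : ℕ) + 1)) * hB +
    (qchoose (t + s + N + 1 : ℕ) (N + 1) * qchoose (t + s : ℕ) s) *
      qnum_succ_mul_qchoose_succ x (t + s + N)

lemma qbinom_mul_qbinom_mul_qbinom_div_qint {k ℓ n s : ℕ} (hn : 0 < n) (hkℓ : 0 < k + ℓ)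
    (hs : s ≤ ℓ) :
    qbinom ((k : ℤ) + s) n * qbinom ((k : ℤ) + 2 * s) s * qbinom ((k : ℤ) + s + ℓ) ((ℓ : ℤ) - s) /
        qint (k + s + ℓ) =
      qbinom ((n : ℤ) + ℓ) n / qint (n + ℓ) *
        (qchoose ℓ s * qchoose ((k : ℤ) + ℓ - 1 + s) (n - 1 + ℓ)) := by
  obtain ⟨t, rfl⟩ : ∃ t, ℓ = s + t := ⟨ℓ - s, by omega⟩
  obtain ⟨m, rfl⟩ : ∃ m, n = m + 1 := ⟨n - 1, by omega⟩
  have core := qchoose_mul_qchoose_mul_qchoose (k + s + (s + t) : ℕ) s t m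
  rw [show ((s + t : ℕ) : ℤ) - s = t by push_cast; ring, qbinom_eq_qchoose (by positivity),
    qbinom_eq_qchoose (by positivity), qbinom_eq_qchoose (by positivity),
    qbinom_eq_qchoose (by positivity), ← qnum_natCast, ← qnum_natCast, Nat.add_sub_cancel]
  have hx : qnum (k + s + (s + t) : ℕ) ≠ 0 := qnum_ne_zero (by omega)
  have hN : qnum (m + 1 + (s + t) : ℕ) ≠ 0 := qnum_ne_zero (by omega)
  push_cast at core hx hN ⊢
  ring_nf at core hx hN ⊢
  field_simp
  linear_combination core

/-- For `k, ℓ ≥ 0` and `n > 0`: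
`∑_{s=0}^{ℓ} (-1)^{ℓ-s} u^{binom(ℓ-s,2)} [k+s choose n]_u [k+2s choose s]_u [k+s+ℓ choose ℓ-s]_u·[k+2ℓ]/[k+s+ℓ]`
`= u^{ℓ²+ℓ(k-n)}·([k+2ℓ]/[n+ℓ])·[n+ℓ choose n]_u·[k+ℓ-1 choose n-1]_u`,
computing the matrix product `P^n = A^n·(A^0)^{-1}`. -/
theorem product_matrix_entry (k ℓ n : ℕ) (hn : 0 < n) :
    ∑ s ∈ range (ℓ + 1),
      (-1 : K) ^ (ℓ - s) * u ^ ((ℓ - s).choose 2) * qbinom ((k : ℤ) + s) (n : ℤ) *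
        qbinom ((k : ℤ) + 2 * s) (s : ℤ) * qbinom ((k : ℤ) + s + ℓ) ((ℓ : ℤ) - s) *
        (qint (k + 2 * ℓ) / qint (k + s + ℓ)) =
      u ^ ((ℓ : ℤ) ^ 2 + (ℓ : ℤ) * ((k : ℤ) - n)) * (qint (k + 2 * ℓ) / qint (n + ℓ)) *
        qbinom ((n : ℤ) + ℓ) (n : ℤ) * qbinom ((k : ℤ) + ℓ - 1) ((n : ℤ) - 1) := by
  rcases Nat.eq_zero_or_pos (k + ℓ) with h0 | hkℓ
  · obtain ⟨rfl, rfl⟩ : k = 0 ∧ ℓ = 0 := by omega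
    simp [qint]
  trans qint (k + 2 * ℓ) * (qbinom ((n : ℤ) + ℓ) n / qint (n + ℓ)) *
    qfwdDiff ℓ (fun y => qchoose y (n - 1 + ℓ)) ((k : ℤ) + ℓ - 1)
  · rw [qfwdDiff, Nat.sum_antidiagonal_eq_sum_range_succ_mk, mul_sum]
    refine sum_congr rfl fun s hs => ?_
    linear_combination ((-1) ^ (ℓ - s) * u ^ (ℓ - s).choose 2 * qint (k + 2 * ℓ)) *
      qbinom_mul_qbinom_mul_qbinom_div_qint hn hkℓ (mem_range_succ_iff.mp hs)
  · have hexp : (ℓ : ℤ) * ((k : ℤ) + ℓ - 1 - ((n - 1 : ℕ) : ℤ)) = ℓ ^ 2 + ℓ * ((k : ℤ) - n) := by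
      rw [Nat.cast_pred hn]
      ring
    rw [qfwdDiff_qchoose, hexp, ← Nat.cast_pred hn, qbinom_eq_qchoose (by omega),
      qbinom_eq_qchoose (by omega)]
    ring

end
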